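/- arXiv:2304.09186 — 3 statements merged into one kernel-verified Lean document; each statement's English description precedes it below -/
import Mathlib

section
/- Let G = (V,E) be a locally finite simple graph, S ⊆ V, t ∈ ℕ, and let C be an infinite component of S. Let T be a nonempty finite set of t-trifurcations of S, all belonging to C, such that the sets C_{x,t}(S), x ∈ T, are pairwise disjoint. Then the subgraph induced on C \ ⋃_{x∈T} C_{x,t}(S) has at least |T| + 2 infinite connected components. -/
/-!
The sets `D x = C_{x,t}(S)`, `x ∈ T`, are disjoint connected pieces of the connected set `C`.
Some piece `D y` is a leaf: all other pieces lie in one component of `C \ D y` (take an ordered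
pair `(x, y)` minimising the number of pieces on `y`'s side of `D x`). Removing the leaf from
`C \ ⋃_{x ≠ y} D x` can merge away only the one component that contains `D y`, while the at
least two infinite components of `C \ D y` that avoid the other pieces survive as new
components. So by induction on `|T|` each piece after the first adds at least one infinite
component, and the first gives three.
-/

/-- The closed ball of radius `t` around `x` in the graph `G`. -/
def GraphBall {V : Type*} (G : SimpleGraph V) (x : V) (t : ℕ) : Set V :=
  {y | G.edist x y ≤ t}

/-- The inner vertex boundary of a set `A`. -/
def InnerBoundary {V : Type*} (G : SimpleGraph V) (A : Set V) : Set V :=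
  {x ∈ A | ∃ y, y ∉ A ∧ G.Adj x y}

/-- The connected component of `x` in the subgraph of `G` induced on `S`,
viewed as a subset of `V` (empty if `x ∉ S`). -/
def Comp {V : Type*} (G : SimpleGraph V) (S : Set V) (x : V) : Set V :=
  {y | ∃ (hx : x ∈ S) (hy : y ∈ S), (G.induce S).Reachable ⟨x, hx⟩ ⟨y, hy⟩}

/-- The subgraph of `G` induced on `S` has at least `n` infinite connected
components. -/
def AtLeastInfComps {V : Type*} (G : SimpleGraph V) (S : Set V) (n : ℕ) : Prop :=
  ∃ f : Fin n → V, (∀ i, f i ∈ S ∧ (Comp G S (f i)).Infinite) ∧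
    Function.Injective (fun i => Comp G S (f i))

/-- `x` is a `t`-trifurcation of `S`: it lies in an infinite component `C` of `S`
and the subgraph induced on `C \ C_{x,t}(S)` has at least `3` infinite components. -/
def IsTrifurcation {V : Type*} (G : SimpleGraph V) (S : Set V) (t : ℕ) (x : V) : Prop :=
  x ∈ S ∧ (Comp G S x).Infinite ∧
    AtLeastInfComps G (Comp G S x \ Comp G (S ∩ GraphBall G x t) x) 3

section

variable {V : Type*} {G : SimpleGraph V}

inductive ReachableIn (G : SimpleGraph V) (A : Set V) : V → V → Prop
  | refl {u : V} (hu : u ∈ A) : ReachableIn G A u u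
  | tail {u v w : V} (huv : ReachableIn G A u v) (h : G.Adj v w) (hw : w ∈ A) :
      ReachableIn G A u w

namespace ReachableIn

variable {A B : Set V} {u v w : V}

lemma mem_left (h : ReachableIn G A u v) : u ∈ A := by
  induction h with
  | refl hu => exact hu
  | tail _ _ _ ih => exact ih

lemma mem_right (h : ReachableIn G A u v) : v ∈ A := by
  cases h with
  | refl hu => exact hu
  | tail _ _ hw => exact hw

lemma trans (huv : ReachableIn G A u v) (hvw : ReachableIn G A v w) : ReachableIn G A u w := by
  induction hvw with
  | refl _ => exact huv
  | tail _ hadj hw ih => exact ih.tail hadj hw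

lemma head (h : G.Adj u v) (hu : u ∈ A) (hvw : ReachableIn G A v w) : ReachableIn G A u w :=
  (ReachableIn.refl hu |>.tail h hvw.mem_left).trans hvw

lemma symm (h : ReachableIn G A u v) : ReachableIn G A v u := by
  induction h with
  | refl hu => exact .refl hu
  | tail huv hadj hw ih => exact head hadj.symm hw ih

lemma mono (hAB : A ⊆ B) (h : ReachableIn G A u v) : ReachableIn G B u v := by
  induction h with
  | refl hu => exact .refl (hAB hu)
  | tail _ hadj hw ih => exact ih.tail hadj (hAB hw)

lemma restrict (h : ReachableIn G A u v) (hB : ∀ q, ReachableIn G A u q → q ∈ B) :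
    ReachableIn G B u v := by
  induction h with
  | refl hu => exact .refl (hB _ (.refl hu))
  | tail huv hadj hw ih => exact ih.tail hadj (hB _ (huv.tail hadj hw))

end ReachableIn

lemma mem_comp_iff {A : Set V} {x y : V} : y ∈ Comp G A x ↔ ReachableIn G A x y := by
  constructor
  · rintro ⟨hx, hy, ⟨p⟩⟩
    suffices ∀ a b : A, (G.induce A).Walk a b → ReachableIn G A a b from this _ _ p
    intro a b p
    induction p with
    | nil => exact .refl (Subtype.mem _)
    | cons hadj _ ih => exact ih.head (by simpa using hadj) (Subtype.mem _)
  · intro h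
    refine ⟨h.mem_left, h.mem_right, ?_⟩
    induction h with
    | refl hu => rfl
    | tail huv hadj hw ih =>
      exact ih.trans (SimpleGraph.Adj.reachable (by simpa using hadj))

section Components

variable {A B C D E F : Set V} {x y z : V}

lemma mem_comp_self (hx : x ∈ A) : x ∈ Comp G A x := mem_comp_iff.2 (.refl hx)

lemma comp_subset : Comp G A x ⊆ A := fun _ h => (mem_comp_iff.1 h).mem_right

lemma comp_eq_of_mem (h : y ∈ Comp G A x) : Comp G A y = Comp G A x := by
  ext z
  simp only [mem_comp_iff] at h ⊢
  exact ⟨h.trans, h.symm.trans⟩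

lemma comp_eq_of_mem_of_mem (hx : z ∈ Comp G A x) (hy : z ∈ Comp G A y) :
    Comp G A x = Comp G A y :=
  (comp_eq_of_mem hx).symm.trans (comp_eq_of_mem hy)

lemma disjoint_comp_of_ne (h : Comp G A x ≠ Comp G A y) : Disjoint (Comp G A x) (Comp G A y) :=
  Set.disjoint_left.2 fun _ hx hy => h (comp_eq_of_mem_of_mem hx hy)

lemma comp_mono (hAB : A ⊆ B) : Comp G A x ⊆ Comp G B x :=
  fun _ h => mem_comp_iff.2 ((mem_comp_iff.1 h).mono hAB)

lemma comp_eq_of_subset (hAB : A ⊆ B) (h : Comp G B x ⊆ A) : Comp G A x = Comp G B x := by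
  refine (comp_mono hAB).antisymm fun q hq => mem_comp_iff.2 ?_
  exact (mem_comp_iff.1 hq).restrict fun r hr => h (mem_comp_iff.2 hr)

def IsPreconnectedIn (G : SimpleGraph V) (D : Set V) : Prop :=
  ∀ u ∈ D, ∀ v ∈ D, ReachableIn G D u v

lemma isPreconnectedIn_comp : IsPreconnectedIn G (Comp G A x) := by
  intro u hu v hv
  rw [← comp_eq_of_mem hu] at hv ⊢
  exact (mem_comp_iff.1 hv).restrict fun r hr => mem_comp_iff.2 hr

lemma IsPreconnectedIn.subset_comp (hD : IsPreconnectedIn G D) (hDA : D ⊆ A) (hx : x ∈ D) :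
    D ⊆ Comp G A x :=
  fun _ hq => mem_comp_iff.2 ((hD x hx _ hq).mono hDA)

lemma ReachableIn.exists_adj_of_notMem_of_mem {u v : V} (h : ReachableIn G A u v)
    (hu : u ∉ D) (hv : v ∈ D) : ∃ p ∈ Comp G (A \ D) u, ∃ q ∈ D, G.Adj p q := by
  by_contra! hno
  suffices ∀ w, ReachableIn G A u w → w ∈ Comp G (A \ D) u from (comp_subset (this v h)).2 hv
  intro w hw
  induction hw with
  | refl hu' => exact mem_comp_self ⟨hu', hu⟩
  | @tail _ w' _ hadj hw ih =>
    have hw'D : w' ∉ D := fun hD => hno _ ih _ hD hadj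
    exact mem_comp_iff.2 ((mem_comp_iff.1 ih).tail hadj ⟨hw, hw'D⟩)

lemma mem_comp_diff_of_disjoint (hC : IsPreconnectedIn G C) (hE : IsPreconnectedIn G E)
    (hEC : E ⊆ C \ F) (hy : y ∈ E) (hz : z ∈ C \ E) (hF : Disjoint (Comp G (C \ E) z) F) :
    z ∈ Comp G (C \ F) y := by
  obtain ⟨p, hp, q, hq, hpq⟩ :=
    (hC z hz.1 y (hEC hy).1).exists_adj_of_notMem_of_mem hz.2 hy
  have hzF : Comp G (C \ E) z ⊆ C \ F :=
    fun r hr => ⟨(comp_subset hr).1, hF.notMem_of_mem_left hr⟩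
  have hzp : ReachableIn G (C \ F) z p :=
    mem_comp_iff.1 (isPreconnectedIn_comp.subset_comp hzF (mem_comp_self hz) hp)
  have hyq : ReachableIn G (C \ F) y q := mem_comp_iff.1 (hE.subset_comp hEC hy hq)
  exact mem_comp_iff.2 ((hyq.tail hpq.symm hzp.mem_right).trans hzp.symm)

end Components

def infiniteComps (G : SimpleGraph V) (A : Set V) : Set (Set V) :=
  {K | K.Infinite ∧ ∃ x ∈ A, Comp G A x = K}

lemma atLeastInfComps_iff {A : Set V} {n : ℕ} :
    AtLeastInfComps G A n ↔ (n : ℕ∞) ≤ (infiniteComps G A).encard := by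
  constructor
  · rintro ⟨f, hf, hinj⟩
    calc (n : ℕ∞) = ENat.card (Fin n) := by simp
      _ ≤ (Set.range fun i => Comp G A (f i)).encard := hinj.encard_range
      _ ≤ (infiniteComps G A).encard := by
        refine Set.encard_le_encard ?_
        rintro _ ⟨i, rfl⟩
        exact ⟨(hf i).2, f i, (hf i).1, rfl⟩
  · intro h
    obtain ⟨g, hg, hinj⟩ :=
      (Set.finite_univ (α := Fin n)).exists_injOn_of_encard_le (by simpa using h)
    choose f hfA hfg using fun i => (hg (Set.mem_univ i)).2
    refine ⟨f, fun i => ⟨hfA i, (hfg i).symm ▸ (hg (Set.mem_univ i)).1⟩, fun i j hij => ?_⟩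
    exact hinj (Set.mem_univ i) (Set.mem_univ j) ((hfg i).symm.trans (hij.trans (hfg j)))

lemma encard_le_encard_sdiff_singleton_add_one {α : Type*} (s : Set α) (a : α) :
    s.encard ≤ (s \ {a}).encard + 1 := by
  simpa using Set.encard_le_encard_sdiff_add_encard s {a}

section Splitting

variable {C E U : Set V} {y b : V}

lemma infiniteComps_sdiff_singleton_subset_union (hE : IsPreconnectedIn G E) (hy : y ∈ E)
    (hEC : E ⊆ C) (hEU : Disjoint E U) :
    infiniteComps G (C \ U) \ {Comp G (C \ U) y} ⊆ infiniteComps G (C \ (E ∪ U)) := by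
  rintro _ ⟨⟨hKinf, k, hk, rfl⟩, hne : Comp G (C \ U) k ≠ _⟩
  have hEK₀ : E ⊆ Comp G (C \ U) y :=
    hE.subset_comp (fun q hq => ⟨hEC hq, hEU.notMem_of_mem_left hq⟩) hy
  have hKE : Comp G (C \ U) k ⊆ C \ (E ∪ U) := fun q hq =>
    ⟨(comp_subset hq).1, fun hq' => hq'.elim
      (fun hqE => (disjoint_comp_of_ne hne).notMem_of_mem_left hq (hEK₀ hqE))
      (comp_subset hq).2⟩
  have hKeq := comp_eq_of_subset (Set.sdiff_subset_sdiff_right Set.subset_union_right) hKE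
  exact ⟨hKinf, k, hKE (mem_comp_self hk), hKeq⟩

lemma mem_infiniteComps_union_and_subset_comp (hC : IsPreconnectedIn G C)
    (hE : IsPreconnectedIn G E) (hy : y ∈ E) (hEC : E ⊆ C) (hEU : Disjoint E U)
    (hUB : U ⊆ Comp G (C \ E) b) {L : Set V}
    (hL : L ∈ infiniteComps G (C \ E) \ {Comp G (C \ E) b}) :
    L ∈ infiniteComps G (C \ (E ∪ U)) ∧ L ⊆ Comp G (C \ U) y := by
  obtain ⟨⟨hLinf, w, hw, rfl⟩, hne : Comp G (C \ E) w ≠ _⟩ := hL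
  have hLU : Disjoint (Comp G (C \ E) w) U := (disjoint_comp_of_ne hne).mono_right hUB
  have hLsub : Comp G (C \ E) w ⊆ C \ (E ∪ U) := fun q hq =>
    ⟨(comp_subset hq).1, fun hq' => hq'.elim (comp_subset hq).2 (hLU.notMem_of_mem_left hq)⟩
  have hLeq := comp_eq_of_subset (Set.sdiff_subset_sdiff_right Set.subset_union_left) hLsub
  refine ⟨⟨hLinf, w, hLsub (mem_comp_self hw), hLeq⟩, ?_⟩
  have hwK₀ : w ∈ Comp G (C \ U) y := mem_comp_diff_of_disjoint hC hE
    (fun q hq => ⟨hEC hq, hEU.notMem_of_mem_left hq⟩) hy hw hLU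
  rw [← comp_eq_of_mem hwK₀]
  exact isPreconnectedIn_comp.subset_comp (hLsub.trans (Set.sdiff_subset_sdiff_right
    Set.subset_union_right)) (mem_comp_self hw)

theorem encard_infiniteComps_add_le (hC : IsPreconnectedIn G C) (hE : IsPreconnectedIn G E)
    (hy : y ∈ E) (hEC : E ⊆ C) (hEU : Disjoint E U) (hUB : U ⊆ Comp G (C \ E) b) :
    (infiniteComps G (C \ U)).encard + (infiniteComps G (C \ E)).encard ≤
      (infiniteComps G (C \ (E ∪ U))).encard + 2 := by
  set 𝒦 := infiniteComps G (C \ U) \ {Comp G (C \ U) y}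
  set ℒ := infiniteComps G (C \ E) \ {Comp G (C \ E) b}
  have hℒ := fun {L} (hL : L ∈ ℒ) =>
    mem_infiniteComps_union_and_subset_comp hC hE hy hEC hEU hUB hL
  -- every new branch lies inside the old component of `y`, which no member of `𝒦` meets
  have h𝒦ℒ : Disjoint 𝒦 ℒ := by
    refine Set.disjoint_left.2 fun K hK hKL => ?_
    obtain ⟨⟨hKinf, k, -, rfl⟩, hne⟩ := hK
    obtain ⟨q, hq⟩ := hKinf.nonempty
    exact (disjoint_comp_of_ne hne).notMem_of_mem_left hq ((hℒ hKL).2 hq)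
  calc _ ≤ (𝒦.encard + 1) + (ℒ.encard + 1) :=
        add_le_add (encard_le_encard_sdiff_singleton_add_one _ _)
          (encard_le_encard_sdiff_singleton_add_one _ _)
    _ = (𝒦 ∪ ℒ).encard + 2 := by rw [Set.encard_union_eq h𝒦ℒ]; ring
    _ ≤ _ := by
        gcongr
        exact Set.union_subset
          (infiniteComps_sdiff_singleton_subset_union hE hy hEC hEU) fun L hL => (hℒ hL).1

end Splitting

structure IsDisjointPreconnectedFamily (G : SimpleGraph V) (C : Set V) (T : Finset V)
    (D : V → Set V) : Prop where
  mem_self : ∀ x ∈ T, x ∈ D x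
  subset : ∀ x ∈ T, D x ⊆ C
  preconnected : ∀ x ∈ T, IsPreconnectedIn G (D x)
  pairwiseDisjoint : (T : Set V).PairwiseDisjoint D

namespace IsDisjointPreconnectedFamily

variable {C : Set V} {T : Finset V} {D : V → Set V} {x y z : V}

lemma mono (hD : IsDisjointPreconnectedFamily G C T D) {T' : Finset V} (hT' : T' ⊆ T) :
    IsDisjointPreconnectedFamily G C T' D where
  mem_self x hx := hD.mem_self x (hT' hx)
  subset x hx := hD.subset x (hT' hx)
  preconnected x hx := hD.preconnected x (hT' hx)
  pairwiseDisjoint := hD.pairwiseDisjoint.subset (by simpa using hT')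

lemma subset_diff (hD : IsDisjointPreconnectedFamily G C T D) (hx : x ∈ T) (hy : y ∈ T)
    (hxy : x ≠ y) : D x ⊆ C \ D y :=
  fun _ hq => ⟨hD.subset x hx hq, (hD.pairwiseDisjoint hx hy hxy).notMem_of_mem_left hq⟩

lemma mem_diff (hD : IsDisjointPreconnectedFamily G C T D) (hx : x ∈ T) (hy : y ∈ T)
    (hxy : x ≠ y) : x ∈ C \ D y :=
  hD.subset_diff hx hy hxy (hD.mem_self x hx)

lemma subset_comp_diff (hD : IsDisjointPreconnectedFamily G C T D) (hx : x ∈ T) (hy : y ∈ T)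
    (hxy : x ≠ y) : D x ⊆ Comp G (C \ D y) x :=
  (hD.preconnected x hx).subset_comp (hD.subset_diff hx hy hxy) (hD.mem_self x hx)

lemma mem_comp_of_notMem_comp (hC : IsPreconnectedIn G C)
    (hD : IsDisjointPreconnectedFamily G C T D) (hx : x ∈ T) (hy : y ∈ T) (hz : z ∈ T)
    (hxy : x ≠ y) (hzy : z ≠ y) (h : z ∉ Comp G (C \ D y) x) : z ∈ Comp G (C \ D x) y := by
  have hne : Comp G (C \ D y) z ≠ Comp G (C \ D y) x :=
    fun heq => h (heq ▸ mem_comp_self (hD.mem_diff hz hy hzy))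
  exact mem_comp_diff_of_disjoint hC (hD.preconnected y hy) (hD.subset_diff hy hx hxy.symm)
    (hD.mem_self y hy) (hD.mem_diff hz hy hzy)
    ((disjoint_comp_of_ne hne).mono_right (hD.subset_comp_diff hx hy hxy))

open Classical in
lemma filter_comp_ssubset (hC : IsPreconnectedIn G C) (hD : IsDisjointPreconnectedFamily G C T D)
    (hx : x ∈ T) (hy : y ∈ T) (hz : z ∈ T) (hxy : x ≠ y) (hzy : z ≠ y)
    (h : z ∉ Comp G (C \ D y) x) :
    T.filter (· ∈ Comp G (C \ D y) z) ⊂ T.filter (· ∈ Comp G (C \ D x) y) := by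
  have hyy : y ∉ Comp G (C \ D y) z := fun hy' => (comp_subset hy').2 (hD.mem_self y hy)
  refine (Finset.ssubset_iff_of_subset fun u hu => ?_).2 ⟨y,
    by simpa [hy] using mem_comp_self (hD.mem_diff hy hx hxy.symm),
    fun hy' => hyy (Finset.mem_filter.1 hy').2⟩
  obtain ⟨huT, hu⟩ := Finset.mem_filter.1 hu
  have huy : u ≠ y := by rintro rfl; exact hyy hu
  have hux : u ∉ Comp G (C \ D y) x := fun hux =>
    h (comp_eq_of_mem_of_mem hu hux ▸ mem_comp_self (hD.mem_diff hz hy hzy))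
  exact Finset.mem_filter.2 ⟨huT, hD.mem_comp_of_notMem_comp hC hx hy huT hxy huy hux⟩

lemma exists_leaf (hC : IsPreconnectedIn G C) (hD : IsDisjointPreconnectedFamily G C T D)
    (hT : T.Nonempty) : ∃ y ∈ T, ∃ b, ∀ z ∈ T, z ≠ y → D z ⊆ Comp G (C \ D y) b := by
  classical
  rcases T.offDiag.eq_empty_or_nonempty with hoff | hoff
  · obtain ⟨y, hy⟩ := hT
    refine ⟨y, hy, y, fun z hz hzy => absurd hoff (Finset.nonempty_iff_ne_empty.1 ⟨(z, y), ?_⟩)⟩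
    exact Finset.mem_offDiag.2 ⟨hz, hy, hzy⟩
  obtain ⟨⟨x, y⟩, hxy, hmin⟩ := T.offDiag.exists_min_image
    (fun p => (T.filter (· ∈ Comp G (C \ D p.1) p.2)).card) hoff
  obtain ⟨hx, hy, hxy⟩ := Finset.mem_offDiag.1 hxy
  refine ⟨y, hy, x, fun z hz hzy => ?_⟩
  have hzx : z ∈ Comp G (C \ D y) x := by
    by_contra h
    have hlt := Finset.card_lt_card (hD.filter_comp_ssubset hC hx hy hz hxy hzy h)
    exact (hmin (y, z) (Finset.mem_offDiag.2 ⟨hy, hz, hzy.symm⟩)).not_gt hlt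
  exact comp_eq_of_mem hzx ▸ hD.subset_comp_diff hz hy hzy

theorem card_add_two_le_encard (hC : IsPreconnectedIn G C)
    (hD : IsDisjointPreconnectedFamily G C T D) (hT : T.Nonempty)
    (h3 : ∀ x ∈ T, 3 ≤ (infiniteComps G (C \ D x)).encard) :
    (T.card + 2 : ℕ∞) ≤ (infiniteComps G (C \ ⋃ x ∈ T, D x)).encard := by
  classical
  induction T using Finset.strongInduction with
  | H T ih =>
  obtain ⟨y, hy, b, hb⟩ := hD.exists_leaf hC hT
  rw [← Finset.insert_erase hy, Finset.set_biUnion_insert,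
    Finset.card_insert_of_notMem (Finset.notMem_erase y T)]
  rcases (T.erase y).eq_empty_or_nonempty with hT' | hT'
  · simpa [hT', show (1 + 2 : ℕ∞) = 3 from rfl] using h3 y hy
  have ih' := ih _ (Finset.erase_ssubset hy) (hD.mono (Finset.erase_subset y T)) hT'
    fun x hx => h3 x (Finset.mem_of_mem_erase hx)
  have hUB : ⋃ x ∈ T.erase y, D x ⊆ Comp G (C \ D y) b := Set.iUnion₂_subset fun z hz =>
    hb z (Finset.mem_of_mem_erase hz) (Finset.ne_of_mem_erase hz)
  have hEU : Disjoint (D y) (⋃ x ∈ T.erase y, D x) := Set.disjoint_iUnion₂_right.2 fun x hx =>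
    hD.pairwiseDisjoint hy (Finset.mem_of_mem_erase hx) (Finset.ne_of_mem_erase hx).symm
  have hsplit := encard_infiniteComps_add_le hC (hD.preconnected y hy) (hD.mem_self y hy)
    (hD.subset y hy) hEU hUB
  rw [← ENat.add_le_add_iff_right (by decide : (2 : ℕ∞) ≠ ⊤)]
  calc ((T.erase y).card + 1 : ℕ) + 2 + (2 : ℕ∞) = ((T.erase y).card + 2) + 3 := by
        push_cast; ring
    _ ≤ _ := (add_le_add ih' (h3 y hy)).trans hsplit

end IsDisjointPreconnectedFamily

end

theorem stmt0_general {V : Type*} (G : SimpleGraph V)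
    (S : Set V) (t : ℕ)
    (C : Set V) (x₀ : V) (hC : C = Comp G S x₀)
    (T : Finset V) (hTne : T.Nonempty)
    (hTtri : ∀ x ∈ T, IsTrifurcation G S t x)
    (hTC : ∀ x ∈ T, x ∈ C)
    (hdisj : ∀ x ∈ T, ∀ x' ∈ T, x ≠ x' →
      Disjoint (Comp G (S ∩ GraphBall G x t) x) (Comp G (S ∩ GraphBall G x' t) x')) :
    AtLeastInfComps G (C \ ⋃ x ∈ T, Comp G (S ∩ GraphBall G x t) x) (T.card + 2) := by
  subst hC
  have hD : IsDisjointPreconnectedFamily G (Comp G S x₀) T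
      fun x => Comp G (S ∩ GraphBall G x t) x :=
    { mem_self := fun x hx => mem_comp_self ⟨(hTtri x hx).1, by simp [GraphBall]⟩
      subset := fun x hx => comp_eq_of_mem (hTC x hx) ▸ comp_mono Set.inter_subset_left
      preconnected := fun _ _ => isPreconnectedIn_comp
      pairwiseDisjoint := hdisj }
  rw [atLeastInfComps_iff]
  refine mod_cast hD.card_add_two_le_encard isPreconnectedIn_comp hTne fun x hx => ?_
  obtain ⟨-, -, h3⟩ := hTtri x hx
  rwa [comp_eq_of_mem (hTC x hx), atLeastInfComps_iff] at h3

theorem stmt0 {V : Type*} (G : SimpleGraph V)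
    (hlf : ∀ v : V, (G.neighborSet v).Finite)
    (S : Set V) (t : ℕ)
    (C : Set V) (x₀ : V) (hx₀ : x₀ ∈ S) (hC : C = Comp G S x₀) (hCinf : C.Infinite)
    (T : Finset V) (hTne : T.Nonempty)
    (hTtri : ∀ x ∈ T, IsTrifurcation G S t x)
    (hTC : ∀ x ∈ T, x ∈ C)
    (hdisj : ∀ x ∈ T, ∀ x' ∈ T, x ≠ x' →
      Disjoint (Comp G (S ∩ GraphBall G x t) x) (Comp G (S ∩ GraphBall G x' t) x')) :
    AtLeastInfComps G (C \ ⋃ x ∈ T, Comp G (S ∩ GraphBall G x t) x) (T.card + 2) :=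
  stmt0_general G S t C x₀ hC T hTne hTtri hTC hdisj
end

section
/- Let G = (V,E) be a locally finite simple graph, S ⊆ V, t ∈ ℕ, W ⊆ V finite, and W' = ⋃_{w∈W} B(w, t+1). Let C be an infinite component of S and let T be a nonempty finite set of t-trifurcations of S with T ⊆ C ∩ W and dist(x,x') ≥ 2t+1 for all distinct x,x' ∈ T. Then the set C ∩ ∂W' has at least |T| + 2 elements. -/
/-!
For `x ∈ T` let `K x = C_{x,t}(S)`. These cores are connected, pairwise disjoint (the balls
`B(x,t)` are) subsets of `C`, and the components of `C \ K x` are the branches at `x`. The cores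
are arranged like the vertices of a tree: a branch at `x` avoiding `y` lies in the branch at `y`
containing `x`. Removing a leaf core inductively shows that, summed over `x ∈ T`, at most
`2(|T| - 1)` branches at `x` meet `T`. As every `x` has three infinite branches, at least
`|T| + 2` infinite branches avoid `T`; they are pairwise disjoint, and each one, being adjacent to
`K x ⊆ B(x,t)` yet infinite, leaves the finite set `W'` and so contains a point of `C ∩ ∂W'`.
-/

section

variable {V : Type*} {G : SimpleGraph V}

section Comp

variable {U U' A C P Q : Set V} {a b c q y z : V}

lemma comp_subset_s1 : Comp G U a ⊆ U := fun _ hb => hb.2.1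

lemma mem_comp_self_s1 (ha : a ∈ U) : a ∈ Comp G U a := ⟨ha, ha, .refl _⟩

lemma mem_comp_of_adj (hb : b ∈ Comp G U a) (hc : c ∈ U) (hbc : G.Adj b c) :
    c ∈ Comp G U a :=
  let ⟨ha, hbU, hr⟩ := hb
  ⟨ha, hc, hr.trans (SimpleGraph.Adj.reachable (G := G.induce U) (u := ⟨b, hbU⟩) hbc)⟩

lemma comp_eq_of_mem_s1 (hb : b ∈ Comp G U a) : Comp G U b = Comp G U a := by
  obtain ⟨ha, hbU, hr⟩ := hb
  ext c
  exact ⟨fun ⟨_, hc, hbc⟩ => ⟨ha, hc, hr.trans hbc⟩, fun ⟨_, hc, hac⟩ => ⟨hbU, hc, hr.symm.trans hac⟩⟩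

lemma comp_eq_comp_of_mem_of_mem (hca : c ∈ Comp G U a) (hcb : c ∈ Comp G U b) :
    Comp G U a = Comp G U b := by
  rw [← comp_eq_of_mem_s1 hca, ← comp_eq_of_mem_s1 hcb]

lemma mem_comp_of_preconnected (hA : (G.induce A).Preconnected) (ha : a ∈ A) (hb : b ∈ A) :
    b ∈ Comp G A a :=
  ⟨ha, hb, hA _ _⟩

lemma exists_adj_of_mem_comp (hb : b ∈ Comp G U a) (haP : a ∈ P) (hbP : b ∉ P) :
    ∃ u ∈ Comp G U a, u ∈ P ∧ ∃ v ∈ U, v ∉ P ∧ G.Adj u v := by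
  classical
  obtain ⟨ha, hbU, ⟨p⟩⟩ := hb
  obtain ⟨d, hd, hdP, hdP'⟩ := p.exists_boundary_dart {w | (w : V) ∈ P} haP hbP
  exact ⟨d.fst, ⟨ha, d.fst.2, ⟨p.takeUntil _ (p.dart_fst_mem_support_of_mem_darts hd)⟩⟩,
    hdP, d.snd, d.snd.2, hdP', d.adj⟩

lemma comp_subset_comp_of_subset (h : Comp G U a ⊆ U') : Comp G U a ⊆ Comp G U' a := by
  intro b hb
  by_contra hbP
  obtain ⟨u, hu, huP, v, hv, hvP, huv⟩ :=
    exists_adj_of_mem_comp hb (mem_comp_self_s1 (h (mem_comp_self_s1 hb.1))) hbP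
  exact hvP (mem_comp_of_adj huP (h (mem_comp_of_adj hu hv huv)) huv)

lemma preconnected_induce_comp : (G.induce (Comp G U a)).Preconnected := by
  rintro ⟨b, hb⟩ ⟨c, hc⟩
  rw [← comp_eq_of_mem_s1 hb] at hc
  have hsub : Comp G U b ⊆ Comp G U a := (comp_eq_of_mem_s1 hb).le
  exact (comp_subset_comp_of_subset hsub hc).2.2

lemma comp_inter_innerBoundary_nonempty (hb : b ∈ Comp G U a) (haA : a ∈ A) (hbA : b ∉ A) :
    (Comp G U a ∩ InnerBoundary G A).Nonempty := by
  obtain ⟨u, hu, huA, v, -, hvA, huv⟩ := exists_adj_of_mem_comp hb haA hbA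
  exact ⟨u, hu, huA, v, hvA, huv⟩

lemma exists_adj_of_mem_diff (hC : (G.induce C).Preconnected) (hQC : Q ⊆ C) (hq : q ∈ Q)
    (hy : y ∈ C \ Q) : ∃ d ∈ Comp G (C \ Q) y, ∃ u ∈ Q, G.Adj d u := by
  obtain ⟨d, -, hd, u, huC, hu, hdu⟩ := exists_adj_of_mem_comp
    (mem_comp_of_preconnected hC hy.1 (hQC hq)) (mem_comp_self_s1 hy) fun h => (comp_subset_s1 h).2 hq
  refine ⟨d, hd, u, ?_, hdu⟩
  by_contra huQ
  exact hu (mem_comp_of_adj hd ⟨huC, huQ⟩ hdu)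

lemma comp_diff_inter_innerBoundary_nonempty (hC : (G.induce C).Preconnected) (hQC : Q ⊆ C)
    (hq : q ∈ Q) (hA : A.Finite) (hQA : ∀ u ∈ Q, ∀ d, G.Adj d u → d ∈ A)
    (hE : (Comp G (C \ Q) z).Infinite) : (Comp G (C \ Q) z ∩ InnerBoundary G A).Nonempty := by
  obtain ⟨hz, -⟩ := hE.nonempty.some_mem
  obtain ⟨d, hd, u, hu, hdu⟩ := exists_adj_of_mem_diff hC hQC hq hz
  rw [← comp_eq_of_mem_s1 hd] at hE ⊢
  obtain ⟨e, he, heA⟩ := (hE.sdiff hA).nonempty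
  exact comp_inter_innerBoundary_nonempty he (hQA u hu d hdu) heA

end Comp

section Ball

variable {x y d u : V} {t : ℕ}

lemma mem_graphBall_self (x : V) (t : ℕ) : x ∈ GraphBall G x t := by
  simp [GraphBall]

lemma mem_graphBall_succ_of_adj (hu : u ∈ GraphBall G x t) (hud : G.Adj u d) :
    d ∈ GraphBall G x (t + 1) :=
  calc G.edist x d ≤ G.edist x u + G.edist u d := SimpleGraph.edist_triangle
    _ ≤ t + 1 := add_le_add hu (SimpleGraph.edist_eq_one_iff_adj.mpr hud).le

lemma graphBall_succ_subset (x : V) (t : ℕ) :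
    GraphBall G x (t + 1) ⊆ insert x (⋃ y ∈ G.neighborSet x, GraphBall G y t) := by
  intro z hz
  obtain ⟨p, hp⟩ := SimpleGraph.exists_walk_of_edist_ne_top (ne_top_of_le_ne_top
    (ENat.natCast_ne_top (t + 1)) hz)
  cases p with
  | nil => exact Set.mem_insert _ _
  | @cons _ y _ hxy q =>
    refine Set.mem_insert_of_mem _ (Set.mem_biUnion hxy ?_)
    have hlen : ((q.length + 1 : ℕ) : ℕ∞) ≤ (t + 1 : ℕ) := by
      rw [← SimpleGraph.Walk.length_cons hxy, hp]; exact hz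
    calc G.edist y z ≤ q.length := SimpleGraph.edist_le q
      _ ≤ t := by exact_mod_cast Nat.le_of_succ_le_succ (by exact_mod_cast hlen)

lemma graphBall_finite (hlf : ∀ v : V, (G.neighborSet v).Finite) (x : V) (t : ℕ) :
    (GraphBall G x t).Finite := by
  induction t generalizing x with
  | zero =>
    refine (Set.finite_singleton x).subset fun z hz => ?_
    have : G.edist x z = 0 := nonpos_iff_eq_zero.mp (by exact_mod_cast hz)
    exact (SimpleGraph.edist_eq_zero_iff.mp this).symm
  | succ t ih =>
    exact (((hlf x).biUnion fun y _ => ih y).insert x).subset (graphBall_succ_subset x t)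

lemma disjoint_graphBall (h : (2 * t + 1 : ℕ) ≤ G.edist x y) :
    Disjoint (GraphBall G x t) (GraphBall G y t) := by
  refine Set.disjoint_left.mpr fun z hzx hzy => ?_
  have : G.edist x y ≤ (2 * t : ℕ) :=
    calc G.edist x y ≤ G.edist x z + G.edist z y := SimpleGraph.edist_triangle
      _ ≤ t + t := add_le_add hzx (SimpleGraph.edist_comm.trans_le hzy)
      _ = (2 * t : ℕ) := by push_cast; ring
  have := h.trans this
  norm_cast at this
  omega

end Ball

structure IsCoreFamily (G : SimpleGraph V) (C T : Set V) (K : V → Set V) : Prop where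
  preconnected : (G.induce C).Preconnected
  mem_core : ∀ x ∈ T, x ∈ K x
  core_subset : ∀ x ∈ T, K x ⊆ C
  preconnected_core : ∀ x ∈ T, (G.induce (K x)).Preconnected
  pairwiseDisjoint : T.PairwiseDisjoint K

namespace IsCoreFamily

variable {C T T' : Set V} {K : V → Set V} {x y z z' : V}

lemma mono (hK : IsCoreFamily G C T K) (h : T' ⊆ T) : IsCoreFamily G C T' K where
  preconnected := hK.preconnected
  mem_core x hx := hK.mem_core x (h hx)
  core_subset x hx := hK.core_subset x (h hx)
  preconnected_core x hx := hK.preconnected_core x (h hx)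
  pairwiseDisjoint := hK.pairwiseDisjoint.subset h

lemma notMem_comp_diff_core (hK : IsCoreFamily G C T K) (hx : x ∈ T) :
    x ∉ Comp G (C \ K x) z :=
  fun h => (comp_subset_s1 h).2 (hK.mem_core x hx)

variable (hK : IsCoreFamily G C T K) (hx : x ∈ T) (hy : y ∈ T) (hxy : x ≠ y)
include hK hx hy hxy

lemma core_subset_diff : K y ⊆ C \ K x := fun _ hu =>
  ⟨hK.core_subset y hy hu, Set.disjoint_right.mp (hK.pairwiseDisjoint hx hy hxy) hu⟩

lemma mem_diff_core : y ∈ C \ K x :=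
  hK.core_subset_diff hx hy hxy (hK.mem_core y hy)

lemma core_subset_comp : K y ⊆ Comp G (C \ K x) y := fun _ hu =>
  comp_subset_comp_of_subset ((comp_subset_s1).trans (hK.core_subset_diff hx hy hxy))
    (mem_comp_of_preconnected (hK.preconnected_core y hy) (hK.mem_core y hy) hu)

lemma comp_diff_subset (hyz : y ∉ Comp G (C \ K x) z) :
    Comp G (C \ K x) z ⊆ Comp G (C \ K y) x := by
  intro w hw
  have hFy : Comp G (C \ K x) z ⊆ C \ K y := fun u hu =>
    ⟨(comp_subset_s1 hu).1, fun huy => hyz <| by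
      rw [comp_eq_comp_of_mem_of_mem hu (hK.core_subset_comp hx hy hxy huy)]
      exact mem_comp_self_s1 (hK.mem_diff_core hx hy hxy)⟩
  obtain ⟨d, hd, u, hu, hdu⟩ :=
    exists_adj_of_mem_diff hK.preconnected (hK.core_subset x hx) (hK.mem_core x hx) hw.1
  have hdx : d ∈ Comp G (C \ K y) x :=
    mem_comp_of_adj (hK.core_subset_comp hy hx hxy.symm hu) (hFy hd) hdu.symm
  rw [← comp_eq_of_mem_s1 hd] at hw hFy
  rw [← comp_eq_of_mem_s1 hdx]
  exact comp_subset_comp_of_subset hFy hw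

lemma disjoint_comp_diff (hyz : y ∉ Comp G (C \ K x) z) (hxz : x ∉ Comp G (C \ K y) z') :
    Disjoint (Comp G (C \ K x) z) (Comp G (C \ K y) z') :=
  Set.disjoint_left.mpr fun _ hw hw' => hxz <| by
    rw [comp_eq_comp_of_mem_of_mem hw' (hK.comp_diff_subset hx hy hxy hyz hw)]
    exact mem_comp_self_s1 (hK.mem_diff_core hy hx hxy.symm)

end IsCoreFamily

section Counting

open Classical

noncomputable def branchesMeeting (G : SimpleGraph V) (C : Set V) (K : V → Set V) (T : Finset V)
    (x : V) : Finset (Set V) :=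
  (T.erase x).image fun y => Comp G (C \ K x) y

variable {C : Set V} {K : V → Set V} {T : Finset V} {x x' y w : V}

lemma comp_mem_branchesMeeting (hy : y ∈ T.erase x) (hw : y ∈ Comp G (C \ K x) w) :
    Comp G (C \ K x) w ∈ branchesMeeting G C K T x :=
  Finset.mem_image.mpr ⟨y, hy, comp_eq_of_mem_s1 hw⟩

lemma branchesMeeting_eq_insert (hx' : x' ∈ T) (hx : x ≠ x') :
    branchesMeeting G C K T x =
      insert (Comp G (C \ K x) x') (branchesMeeting G C K (T.erase x') x) := by
  rw [branchesMeeting, branchesMeeting, ← Finset.image_insert, Finset.erase_right_comm,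
    Finset.insert_erase (Finset.mem_erase.mpr ⟨hx.symm, hx'⟩)]

lemma card_branchesMeeting_le (hx' : x' ∈ T) (hx : x ≠ x') :
    (branchesMeeting G C K T x).card ≤ (branchesMeeting G C K (T.erase x') x).card +
      if Comp G (C \ K x) x' ∉ branchesMeeting G C K (T.erase x') x then 1 else 0 := by
  rw [branchesMeeting_eq_insert hx' hx]
  split_ifs with h
  · rw [Finset.insert_eq_of_mem h, add_zero]
  · exact Finset.card_insert_le _ _

lemma le_card_filter_add_card_branchesMeeting {n : ℕ} (hxK : x ∈ K x) (f : Fin n → V)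
    (hf : Function.Injective fun i => Comp G (C \ K x) (f i)) :
    n ≤ (Finset.univ.filter fun i => ∀ y ∈ T, y ∉ Comp G (C \ K x) (f i)).card +
      (branchesMeeting G C K T x).card := by
  have hmeet : (Finset.univ.filter fun i => ¬ ∀ y ∈ T, y ∉ Comp G (C \ K x) (f i)).card ≤
      (branchesMeeting G C K T x).card := by
    refine Finset.card_le_card_of_injOn _ (fun i hi => ?_) hf.injOn
    simp only [Finset.coe_filter, Set.mem_ofPred_eq, Finset.mem_univ, true_and, not_forall,
      not_not] at hi
    obtain ⟨y, hy, hyi⟩ := hi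
    exact comp_mem_branchesMeeting
      (Finset.mem_erase.mpr ⟨fun h => (comp_subset_s1 (h ▸ hyi)).2 hxK, hy⟩) hyi
  have hsplit := Finset.card_filter_add_card_filter_not (s := Finset.univ)
    fun i => ∀ y ∈ T, y ∉ Comp G (C \ K x) (f i)
  rw [Finset.card_univ, Fintype.card_fin] at hsplit
  omega

namespace IsCoreFamily

variable (hK : IsCoreFamily G C ↑T K)
include hK

lemma exists_card_branchesMeeting_le_one (hT : 2 ≤ T.card) :
    ∃ x ∈ T, (branchesMeeting G C K T x).card ≤ 1 := by
  let size : V × V → ℕ := fun p => (T.filter (· ∈ Comp G (C \ K p.1) p.2)).card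
  obtain ⟨a, ha, b, hb, hab⟩ := Finset.one_lt_card.mp hT
  obtain ⟨⟨x, z⟩, hp, hmax⟩ := ((T ×ˢ T).filter fun p => p.1 ≠ p.2).exists_max_image size
    ⟨(a, b), by simp [ha, hb, hab]⟩
  simp only [Finset.mem_filter, Finset.mem_product] at hp
  obtain ⟨⟨hx, hz⟩, hxz⟩ := hp
  refine ⟨x, hx, Finset.card_le_one.mpr ?_⟩
  suffices h : ∀ y ∈ T.erase x, y ∈ Comp G (C \ K x) z by
    simp only [branchesMeeting, Finset.mem_image]
    rintro _ ⟨y, hy, rfl⟩ _ ⟨y', hy', rfl⟩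
    rw [comp_eq_of_mem_s1 (h y hy), comp_eq_of_mem_s1 (h y' hy')]
  intro y hy
  obtain ⟨hyx, hyT⟩ := Finset.mem_erase.mp hy
  by_contra hyz
  -- the branch at `y` containing `x` would strictly contain this branch, contradicting maximality
  have hsub := hK.comp_diff_subset hx hyT (Ne.symm hyx) hyz
  have hlt : size (x, z) < size (y, x) := by
    refine Finset.card_lt_card ((Finset.ssubset_iff_of_subset fun w hw => ?_).mpr ⟨x, ?_, ?_⟩)
    · simp only [Finset.mem_filter] at hw ⊢
      exact ⟨hw.1, hsub hw.2⟩
    · simp [hx, mem_comp_self_s1 (hK.mem_diff_core hyT hx hyx)]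
    · simp [hK.notMem_comp_diff_core hx]
  exact (hmax (y, x) (by simp [hx, hyT, hyx])).not_gt hlt

lemma card_filter_notMem_branchesMeeting_le_one (hx' : x' ∈ T) :
    ((T.erase x').filter fun x =>
      Comp G (C \ K x) x' ∉ branchesMeeting G C K (T.erase x') x).card ≤ 1 := by
  refine Finset.card_le_one.mpr fun a ha b hb => by_contra fun hab => ?_
  simp only [Finset.mem_filter, Finset.mem_erase] at ha hb
  obtain ⟨⟨hax', haT⟩, ha⟩ := ha
  obtain ⟨⟨hbx', hbT⟩, hb⟩ := hb
  have hba : b ∉ Comp G (C \ K a) x' := fun h =>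
    ha (comp_mem_branchesMeeting (by simp [hbx', hbT, Ne.symm hab]) h)
  have hab' : a ∉ Comp G (C \ K b) x' := fun h =>
    hb (comp_mem_branchesMeeting (by simp [hax', haT, hab]) h)
  exact Set.disjoint_left.mp (hK.disjoint_comp_diff haT hbT hab hba hab')
    (mem_comp_self_s1 (hK.mem_diff_core haT hx' hax'))
    (mem_comp_self_s1 (hK.mem_diff_core hbT hx' hbx'))

end IsCoreFamily

theorem IsCoreFamily.sum_card_branchesMeeting_le (hK : IsCoreFamily G C ↑T K) :
    ∑ x ∈ T, (branchesMeeting G C K T x).card ≤ 2 * (T.card - 1) := by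
  induction T using Finset.strongInduction with | H T ih => ?_
  rcases le_or_gt T.card 1 with hT | hT
  · refine (Finset.sum_eq_zero fun x hx => ?_).trans_le (Nat.zero_le _)
    have : (T.erase x).card = 0 := by rw [Finset.card_erase_of_mem hx]; omega
    simp [branchesMeeting, Finset.card_eq_zero.mp this]
  obtain ⟨x', hx', hleaf⟩ := hK.exists_card_branchesMeeting_le_one hT
  set T' := T.erase x'
  have hIH := ih T' (Finset.erase_ssubset hx') (hK.mono (Finset.coe_subset.mpr (T.erase_subset x')))
  have hstep : ∑ x ∈ T', (branchesMeeting G C K T x).card ≤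
      ∑ x ∈ T', (branchesMeeting G C K T' x).card + 1 :=
    calc ∑ x ∈ T', (branchesMeeting G C K T x).card
        ≤ ∑ x ∈ T', ((branchesMeeting G C K T' x).card +
          if Comp G (C \ K x) x' ∉ branchesMeeting G C K T' x then 1 else 0) :=
          Finset.sum_le_sum fun x hx => card_branchesMeeting_le hx' (Finset.ne_of_mem_erase hx)
      _ = ∑ x ∈ T', (branchesMeeting G C K T' x).card +
          (T'.filter fun x => Comp G (C \ K x) x' ∉ branchesMeeting G C K T' x).card := by
          rw [Finset.sum_add_distrib, Finset.card_filter]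
      _ ≤ _ := Nat.add_le_add_left (hK.card_filter_notMem_branchesMeeting_le_one hx') _
  have hcard : T'.card = T.card - 1 := Finset.card_erase_of_mem hx'
  have hsplit : ∑ x ∈ T, (branchesMeeting G C K T x).card =
      (branchesMeeting G C K T x').card + ∑ x ∈ T', (branchesMeeting G C K T x).card :=
    (Finset.add_sum_erase T _ hx').symm
  omega

theorem IsCoreFamily.card_add_two_le_ncard {L : Set V} (hK : IsCoreFamily G C ↑T K)
    (hT : T.Nonempty) (hL : L.Finite) (h3 : ∀ x ∈ T, AtLeastInfComps G (C \ K x) 3)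
    (hexit : ∀ x ∈ T, ∀ z, (Comp G (C \ K x) z).Infinite → (Comp G (C \ K x) z ∩ L).Nonempty) :
    T.card + 2 ≤ L.ncard := by
  have : Nonempty V := ⟨hT.choose⟩
  choose! f hf using h3
  choose! ℓ hℓ using hexit
  let free x := Finset.univ.filter fun i : Fin 3 => ∀ y ∈ T, y ∉ Comp G (C \ K x) (f x i)
  -- free branches are pairwise disjoint, so their exit points are distinct
  have hfree : ∑ x ∈ T, (free x).card ≤ L.ncard := by
    rw [← Finset.card_sigma, ← Set.ncard_coe_finset]
    refine Set.ncard_le_ncard_of_injOn (fun p => ℓ p.1 (f p.1 p.2)) (fun p hp => ?_) ?_ hL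
    · obtain ⟨hx, -⟩ := Finset.mem_sigma.mp hp
      exact (hℓ p.1 hx _ ((hf p.1 hx).1 p.2).2).2
    rintro ⟨x, i⟩ hp ⟨y, j⟩ hq (hij : ℓ x (f x i) = ℓ y (f y j))
    simp only [Finset.coe_sigma, Set.mem_sigma_iff, Finset.mem_coe, Finset.mem_filter,
      Finset.mem_univ, true_and, free] at hp hq
    have hwx := (hℓ x hp.1 _ ((hf x hp.1).1 i).2).1
    have hwy := (hℓ y hq.1 _ ((hf y hq.1).1 j).2).1
    rw [← hij] at hwy
    by_cases hxy : x = y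
    · subst hxy
      rw [(hf x hp.1).2 (comp_eq_comp_of_mem_of_mem hwx hwy)]
    · exact (Set.disjoint_left.mp (hK.disjoint_comp_diff hp.1 hq.1 hxy (hp.2 y hq.1)
        (hq.2 x hp.1)) hwx hwy).elim
  have hcount : ∑ _x ∈ T, 3 ≤ ∑ x ∈ T, ((free x).card + (branchesMeeting G C K T x).card) :=
    Finset.sum_le_sum fun x hx =>
      le_card_filter_add_card_branchesMeeting (T := T) (hK.mem_core x hx) (f x) (hf x hx).2
  rw [Finset.sum_const, smul_eq_mul, Finset.sum_add_distrib] at hcount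
  have hmeet := hK.sum_card_branchesMeeting_le
  have hT1 := hT.card_pos
  omega

end Counting

end

theorem stmt1_general {V : Type*} (G : SimpleGraph V)
    (hlf : ∀ v : V, (G.neighborSet v).Finite)
    (S : Set V) (t : ℕ) (W : Set V) (hW : W.Finite)
    (C : Set V) (x₀ : V) (hC : C = Comp G S x₀)
    (T : Finset V) (hTne : T.Nonempty)
    (hTtri : ∀ x ∈ T, IsTrifurcation G S t x)
    (hTCW : ↑T ⊆ C ∩ W)
    (hdist : ∀ x ∈ T, ∀ x' ∈ T, x ≠ x' → (2 * t + 1 : ℕ) ≤ G.edist x x') :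
    T.card + 2 ≤ (C ∩ InnerBoundary G (⋃ w ∈ W, GraphBall G w (t + 1))).ncard := by
  have hW' : (⋃ w ∈ W, GraphBall G w (t + 1)).Finite :=
    hW.biUnion fun w _ => graphBall_finite hlf w (t + 1)
  have hCx : ∀ x ∈ T, Comp G S x = C := fun x hx => hC ▸ comp_eq_of_mem_s1 (hC ▸ (hTCW hx).1)
  have hK : IsCoreFamily G C ↑T fun x => Comp G (S ∩ GraphBall G x t) x :=
    { preconnected := hC ▸ preconnected_induce_comp
      mem_core := fun x hx => mem_comp_self_s1 ⟨(hTtri x hx).1, mem_graphBall_self x t⟩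
      core_subset := fun x hx =>
        hCx x hx ▸ comp_subset_comp_of_subset fun _ hy => (comp_subset_s1 hy).1
      preconnected_core := fun _ _ => preconnected_induce_comp
      pairwiseDisjoint := fun x hx y hy hxy => (disjoint_graphBall (hdist x hx y hy hxy)).mono
        (fun _ hz => (comp_subset_s1 hz).2) fun _ hz => (comp_subset_s1 hz).2 }
  refine hK.card_add_two_le_ncard hTne (hW'.subset fun _ hv => hv.2.1) (fun x hx => ?_)
    fun x hx z hz => ?_
  · obtain ⟨-, -, h⟩ := hTtri x hx
    rwa [hCx x hx] at h
  · obtain ⟨v, hv, hvW'⟩ := comp_diff_inter_innerBoundary_nonempty hK.preconnected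
      (hK.core_subset x hx) (hK.mem_core x hx) hW'
      (fun u hu d hdu => Set.mem_biUnion (hTCW hx).2
        (mem_graphBall_succ_of_adj (comp_subset_s1 hu).2 hdu.symm)) hz
    exact ⟨v, hv, (comp_subset_s1 hv).1, hvW'⟩

theorem stmt1 {V : Type*} (G : SimpleGraph V)
    (hlf : ∀ v : V, (G.neighborSet v).Finite)
    (S : Set V) (t : ℕ) (W : Set V) (hW : W.Finite)
    (C : Set V) (x₀ : V) (hx₀ : x₀ ∈ S) (hC : C = Comp G S x₀) (hCinf : C.Infinite)
    (T : Finset V) (hTne : T.Nonempty)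
    (hTtri : ∀ x ∈ T, IsTrifurcation G S t x)
    (hTCW : ↑T ⊆ C ∩ W)
    (hdist : ∀ x ∈ T, ∀ x' ∈ T, x ≠ x' → (2 * t + 1 : ℕ) ≤ G.edist x x') :
    T.card + 2 ≤ (C ∩ InnerBoundary G (⋃ w ∈ W, GraphBall G w (t + 1))).ncard :=
  stmt1_general G hlf S t W hW C x₀ hC T hTne hTtri hTCW hdist
end

section
/- Let G = (V,E) be a locally finite simple graph, r ≥ 1 an integer, and W ⊆ V finite. Set W' = ⋃_{w∈W} B(w,r). Then ∂W' ⊆ ⋃_{b∈∂W} B(b,r); in particular, if m ∈ ℕ satisfies |B(x,r)| ≤ m for every x ∈ V, then |∂W'| ≤ m · |∂W|. -/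
/-!
A vertex `x` of `∂W'` lies within distance `r` of some `w ∈ W`. If `x ∈ W` it is itself in `∂W`,
since its outside neighbour is not even in `W' ⊇ W`. Otherwise a geodesic from `w` to `x` leaves
`W` at a vertex `b ∈ ∂W`, and `b` is at most as far from `x` as `w` is. The counting bound follows
because in a locally finite graph the balls are finite, so `|∂W'| ≤ |⋃_{b ∈ ∂W} B(b,r)|`.
-/

namespace SimpleGraph

variable {V : Type*} {G : SimpleGraph V}

theorem mem_graphBall_self (x : V) (t : ℕ) : x ∈ GraphBall G x t := by
  simp [GraphBall]

theorem reachable_of_mem_graphBall {x y : V} {t : ℕ} (hy : y ∈ GraphBall G x t) :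
    G.Reachable x y :=
  edist_ne_top_iff_reachable.mp (ne_top_of_le_ne_top (ENat.natCast_ne_top t) hy)

theorem graphBall_succ_subset (x : V) (t : ℕ) :
    GraphBall G x (t + 1) ⊆ insert x (⋃ z ∈ G.neighborSet x, GraphBall G z t) := by
  intro y hy
  obtain ⟨p, hp⟩ := (reachable_of_mem_graphBall hy).exists_walk_length_eq_edist
  cases p with
  | nil => exact Set.mem_insert _ _
  | cons hxz q =>
    refine Set.mem_insert_of_mem _ (Set.mem_biUnion hxz ?_)
    have hlen : q.length + 1 ≤ t + 1 := by
      have hy' : G.edist x y ≤ (t + 1 : ℕ) := hy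
      rw [← hp] at hy'
      exact_mod_cast hy'
    exact q.edist_le.trans (by exact_mod_cast Nat.le_of_succ_le_succ hlen)

theorem graphBall_finite (hlf : ∀ v : V, (G.neighborSet v).Finite) (x : V) (t : ℕ) :
    (GraphBall G x t).Finite := by
  induction t generalizing x with
  | zero =>
    refine (Set.finite_singleton x).subset fun y hy => ?_
    have hxy : G.edist x y = 0 := nonpos_iff_eq_zero.mp (by exact_mod_cast hy)
    exact (edist_eq_zero_iff.mp hxy).symm
  | succ t ih =>
    exact (((hlf x).biUnion fun z _ => ih z).insert x).subset (graphBall_succ_subset x t)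

theorem Walk.exists_mem_innerBoundary_edist_le_length {W : Set V} {w x : V} (p : G.Walk w x)
    (hw : w ∈ W) (hx : x ∉ W) : ∃ b ∈ InnerBoundary G W, G.edist b x ≤ p.length := by
  induction p with
  | nil => exact absurd hw hx
  | @cons u v _ huv q ih =>
    by_cases hv : v ∈ W
    · obtain ⟨b, hb, hbx⟩ := ih hv hx
      exact ⟨b, hb, hbx.trans (by simp)⟩
    · exact ⟨u, ⟨hw, v, hv, huv⟩, edist_le _⟩

theorem exists_mem_innerBoundary_edist_le {W : Set V} {w x : V} (hwx : G.Reachable w x)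
    (hw : w ∈ W) (hx : x ∉ W) : ∃ b ∈ InnerBoundary G W, G.edist b x ≤ G.edist w x := by
  obtain ⟨p, hp⟩ := hwx.exists_walk_length_eq_edist
  exact hp ▸ p.exists_mem_innerBoundary_edist_le_length hw hx

theorem innerBoundary_biUnion_graphBall_subset (W : Set V) (r : ℕ) :
    InnerBoundary G (⋃ w ∈ W, GraphBall G w r) ⊆ ⋃ b ∈ InnerBoundary G W, GraphBall G b r := by
  have hW : W ⊆ ⋃ w ∈ W, GraphBall G w r := fun w hw =>
    Set.mem_biUnion hw (mem_graphBall_self w r)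
  rintro x ⟨hx, y, hy, hxy⟩
  obtain ⟨w, hw, hwx⟩ := Set.mem_iUnion₂.mp hx
  by_cases hxW : x ∈ W
  · exact Set.mem_biUnion ⟨hxW, y, fun hyW => hy (hW hyW), hxy⟩ (mem_graphBall_self x r)
  · obtain ⟨b, hb, hbx⟩ :=
      exists_mem_innerBoundary_edist_le (reachable_of_mem_graphBall hwx) hw hxW
    exact Set.mem_biUnion hb (hbx.trans hwx)

end SimpleGraph

theorem Set.Finite.ncard_biUnion_le_mul {ι α : Type*} {t : Set ι} (ht : t.Finite)
    {s : ι → Set α} {m : ℕ} (hs : ∀ i ∈ t, (s i).ncard ≤ m) :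
    (⋃ i ∈ t, s i).ncard ≤ m * t.ncard := by
  lift t to Finset ι using ht
  calc (⋃ i ∈ (t : Set ι), s i).ncard ≤ ∑ i ∈ t, (s i).ncard := by
        simpa using t.set_ncard_biUnion_le s
    _ ≤ t.card • m := Finset.sum_le_card_nsmul _ _ _ hs
    _ = m * (t : Set ι).ncard := by rw [Set.ncard_coe_finset, smul_eq_mul, mul_comm]

theorem stmt4_general {V : Type*} (G : SimpleGraph V)
    (hlf : ∀ v : V, (G.neighborSet v).Finite)
    (r : ℕ) (W : Set V) (hW : W.Finite) :
    (InnerBoundary G (⋃ w ∈ W, GraphBall G w r) ⊆ ⋃ b ∈ InnerBoundary G W, GraphBall G b r) ∧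
    (∀ m : ℕ, (∀ x : V, (GraphBall G x r).ncard ≤ m) →
      (InnerBoundary G (⋃ w ∈ W, GraphBall G w r)).ncard ≤ m * (InnerBoundary G W).ncard) := by
  have hsub := SimpleGraph.innerBoundary_biUnion_graphBall_subset (G := G) W r
  refine ⟨hsub, fun m hm => ?_⟩
  have hbW : (InnerBoundary G W).Finite := hW.subset fun _ hx => hx.1
  calc (InnerBoundary G (⋃ w ∈ W, GraphBall G w r)).ncard
      ≤ (⋃ b ∈ InnerBoundary G W, GraphBall G b r).ncard :=
        Set.ncard_le_ncard hsub (hbW.biUnion fun b _ => SimpleGraph.graphBall_finite hlf b r)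
    _ ≤ m * (InnerBoundary G W).ncard := hbW.ncard_biUnion_le_mul fun b _ => hm b

theorem stmt4 {V : Type*} (G : SimpleGraph V)
    (hlf : ∀ v : V, (G.neighborSet v).Finite)
    (r : ℕ) (hr : 1 ≤ r) (W : Set V) (hW : W.Finite) :
    (InnerBoundary G (⋃ w ∈ W, GraphBall G w r) ⊆ ⋃ b ∈ InnerBoundary G W, GraphBall G b r) ∧
    (∀ m : ℕ, (∀ x : V, (GraphBall G x r).ncard ≤ m) →
      (InnerBoundary G (⋃ w ∈ W, GraphBall G w r)).ncard ≤ m * (InnerBoundary G W).ncard) :=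
  stmt4_general G hlf r W hW
end
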